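/- Let D be the standard dyadic system in ℝ^n and, for ω ∈ {0, 1/3, 2/3}^n, let D^ω be the shifted dyadic system with D^ω_k = {2^{-k}([0,1)^n + m + (−1)^k ω) : m ∈ ℤ^n}. Then each D^ω is nested: for any Q, Q' ∈ D^ω, the intersection Q ∩ Q' is either Q, Q', or empty. -/

import Mathlib

open MeasureTheory Filter
open scoped ENNReal BigOperators

noncomputable section

def cube (n : ℕ) (c : Fin n → ℝ) (l : ℝ) : Set (Fin n → ℝ) :=
  {x | ∀ i, c i ≤ x i ∧ x i < c i + l}

def IsApBound (n : ℕ) (p : ℝ) (w : (Fin n → ℝ) → ℝ) (C : ℝ) : Prop :=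
  ∀ c : Fin n → ℝ, ∀ l : ℝ, 0 < l →
    ((volume (cube n c l)).toReal⁻¹ * ∫ x in cube n c l, w x) *
      ((volume (cube n c l)).toReal⁻¹ * ∫ x in cube n c l, (w x) ^ (-(1/(p-1)) : ℝ)) ^ (p-1) ≤ C

structure DyadicCube (n : ℕ) where
  k : ℤ
  m : Fin n → ℤ

def DyadicCube.side {n : ℕ} (Q : DyadicCube n) : ℝ := (2:ℝ) ^ (-Q.k)

def DyadicCube.corner {n : ℕ} (Q : DyadicCube n) : Fin n → ℝ :=
  fun i => (Q.m i : ℝ) * (2:ℝ) ^ (-Q.k)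

def DyadicCube.toSet {n : ℕ} (Q : DyadicCube n) : Set (Fin n → ℝ) :=
  cube n Q.corner Q.side

def haar1 (ε : Bool) (a l : ℝ) (x : ℝ) : ℝ :=
  if ε = true then (if a ≤ x ∧ x < a + l then l ^ (-(1/2) : ℝ) else 0)
  else (if a ≤ x ∧ x < a + l/2 then l ^ (-(1/2) : ℝ)
        else if a + l/2 ≤ x ∧ x < a + l then -(l ^ (-(1/2) : ℝ)) else 0)

def haarCube (n : ℕ) (ε : Fin n → Bool) (a : Fin n → ℝ) (l : ℝ) (x : Fin n → ℝ) : ℝ :=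
  ∏ i, haar1 (ε i) (a i) l (x i)

def haarD {n : ℕ} (Q : DyadicCube n) (ε : Fin n → Bool) : (Fin n → ℝ) → ℝ :=
  fun x => haarCube n ε Q.corner Q.side x

/-- The shifted dyadic cube `2^{-k}([0,1)^n + m + (-1)^k ω)` of the system `D^ω`. -/
def shiftedCube (n : ℕ) (ω : Fin n → ℝ) (k : ℤ) (m : Fin n → ℤ) : Set (Fin n → ℝ) :=
  cube n (fun i => (2:ℝ) ^ (-k) * ((m i : ℝ) + ((-1:ℝ)) ^ k * ω i)) ((2:ℝ) ^ (-k))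

/-! For `k ≤ k' = k + d`, the corners of generation `k` lie on the grid of mesh `2^{-k'}`
through the corners of generation `k'`: after scaling by `2^{k'}`, two such corners differ by
an integer plus `(-1)^k ω (2^d - (-1)^d)`, which is an integer since `3 ∣ 2^d - (-1)^d` and
`3 ω ∈ ℤ`. Half-open intervals on a common grid of mesh `δ`, of lengths `δ` and a multiple of
`δ`, are nested or disjoint; applied coordinatewise, so are the cubes. -/

lemma three_dvd_two_pow_sub_neg_one_pow (d : ℕ) : (3 : ℤ) ∣ 2 ^ d - (-1) ^ d := by
  simpa using sub_dvd_pow_sub_pow (2 : ℤ) (-1) d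

lemma cube_eq_pi (n : ℕ) (c : Fin n → ℝ) (l : ℝ) :
    cube n c l = Set.univ.pi fun i => Set.Ico (c i) (c i + l) := by
  ext x
  simp [cube]

lemma Ico_subset_or_disjoint_of_sub_eq_int_mul {a b δ L : ℝ} (hδ : 0 < δ) {t N : ℤ}
    (hab : a - b = t * δ) (hL : L = N * δ) :
    Set.Ico a (a + δ) ⊆ Set.Ico b (b + L) ∨
      Disjoint (Set.Ico a (a + δ)) (Set.Ico b (b + L)) := by
  by_cases ht : 0 ≤ t ∧ t < N
  · left
    have ht₀ : (0 : ℝ) ≤ t := by exact_mod_cast ht.1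
    have htN : (t : ℝ) + 1 ≤ N := by exact_mod_cast ht.2
    apply Set.Ico_subset_Ico <;> nlinarith
  · right
    rw [Set.Ico_disjoint_Ico]
    rcases not_and_or.mp ht with ht | ht
    · have ht' : (t : ℝ) + 1 ≤ 0 := by exact_mod_cast (by omega : t + 1 ≤ 0)
      exact (min_le_left _ _).trans (le_max_of_le_right (by nlinarith))
    · have ht' : (N : ℝ) ≤ t := by exact_mod_cast not_lt.mp ht
      exact (min_le_right _ _).trans (le_max_of_le_left (by nlinarith))

lemma cube_subset_or_disjoint_of_grid {n : ℕ} {c c' : Fin n → ℝ} {δ L : ℝ} (hδ : 0 < δ)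
    {N : ℤ} (hL : L = N * δ) (hc : ∀ i, ∃ t : ℤ, c' i - c i = t * δ) :
    cube n c' δ ⊆ cube n c L ∨ Disjoint (cube n c' δ) (cube n c L) := by
  rw [cube_eq_pi, cube_eq_pi]
  by_cases hsub : ∀ i, Set.Ico (c' i) (c' i + δ) ⊆ Set.Ico (c i) (c i + L)
  · exact Or.inl (Set.pi_mono fun i _ => hsub i)
  · push Not at hsub
    obtain ⟨i, hi⟩ := hsub
    obtain ⟨t, ht⟩ := hc i
    exact Or.inr (Set.disjoint_univ_pi.mpr
      ⟨i, (Ico_subset_or_disjoint_of_sub_eq_int_mul hδ ht hL).resolve_left hi⟩)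

lemma exists_int_shiftedCorner_sub {ω : ℝ} {j : ℤ} (hj : 3 * ω = j) (k : ℤ) (d : ℕ)
    (m m' : ℤ) :
    ∃ t : ℤ, (2:ℝ) ^ (-(k + d)) * (m' + (-1:ℝ) ^ (k + d) * ω)
      - (2:ℝ) ^ (-k) * (m + (-1:ℝ) ^ k * ω) = t * (2:ℝ) ^ (-(k + d)) := by
  obtain ⟨c, hc⟩ := three_dvd_two_pow_sub_neg_one_pow d
  have hcR : (2:ℝ) ^ d - (-1) ^ d = 3 * c := by exact_mod_cast hc
  have h2 : (2:ℝ) ^ (-k) = 2 ^ d * 2 ^ (-(k + d)) := by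
    rw [← zpow_natCast, ← zpow_add₀ two_ne_zero]
    ring_nf
  have hsign : (-1:ℝ) ^ (k + d) = (-1) ^ k * (-1) ^ d := by
    rw [zpow_add₀ (by norm_num), zpow_natCast]
  refine ⟨m' - 2 ^ d * m - k.negOnePow * j * c, ?_⟩
  rw [h2, hsign]
  push_cast [Int.cast_negOnePow]
  linear_combination (-(2:ℝ) ^ (-(k + d)) * (-1) ^ k * ω) * hcR
    - (2:ℝ) ^ (-(k + d)) * (-1) ^ k * c * hj

lemma shiftedCube_subset_or_disjoint_of_le {n : ℕ} {ω : Fin n → ℝ}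
    (hω : ∀ i, ∃ j : ℤ, 3 * ω i = j) {k k' : ℤ} (hk : k ≤ k') (m m' : Fin n → ℤ) :
    shiftedCube n ω k' m' ⊆ shiftedCube n ω k m ∨
      Disjoint (shiftedCube n ω k' m') (shiftedCube n ω k m) := by
  obtain ⟨d, rfl⟩ := Int.le.dest hk
  refine cube_subset_or_disjoint_of_grid (N := 2 ^ d) (by positivity) ?_ fun i => ?_
  · rw [Int.cast_pow, Int.cast_two, ← zpow_natCast, ← zpow_add₀ two_ne_zero]
    ring_nf
  · obtain ⟨j, hj⟩ := hω i
    exact exists_int_shiftedCorner_sub hj k d (m i) (m' i)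

/-- Nestedness of the shifted dyadic systems `D^ω`, `ω ∈ {0, 1/3, 2/3}^n`: any two cubes of
`D^ω` intersect in one of them or are disjoint. -/
theorem stmt19 (n : ℕ)
    (ω : Fin n → ℝ) (hω : ∀ i, ω i = 0 ∨ ω i = 1/3 ∨ ω i = 2/3)
    (k : ℤ) (m : Fin n → ℤ) (k' : ℤ) (m' : Fin n → ℤ) :
    shiftedCube n ω k m ∩ shiftedCube n ω k' m' = shiftedCube n ω k m ∨
    shiftedCube n ω k m ∩ shiftedCube n ω k' m' = shiftedCube n ω k' m' ∨
    shiftedCube n ω k m ∩ shiftedCube n ω k' m' = ∅ := by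
  have h3ω : ∀ i, ∃ j : ℤ, 3 * ω i = j := fun i => by
    rcases hω i with h | h | h
    exacts [⟨0, by simp [h]⟩, ⟨1, by simp [h]⟩, ⟨2, by norm_num [h]⟩]
  rw [Set.inter_eq_left, Set.inter_eq_right, ← Set.disjoint_iff_inter_eq_empty]
  rcases le_total k k' with hk | hk
  · rcases shiftedCube_subset_or_disjoint_of_le h3ω hk m m' with h | h
    exacts [Or.inr (Or.inl h), Or.inr (Or.inr h.symm)]
  · rcases shiftedCube_subset_or_disjoint_of_le h3ω hk m' m with h | h
    exacts [Or.inl h, Or.inr (Or.inr h)]
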